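/- arXiv:2602.14851 — 2 statements merged into one kernel-verified Lean document; each statement's English description precedes it below -/
import Mathlib

section
/- Let $\{\Delta_1, \dots, \Delta_s\}$ be a generalized nef partition of $\Delta$ with dual polytopes $\nabla_j = \mathrm{Conv}(\{0\} \cup I_j)$. Then $\Delta^\circ = \mathrm{Conv}(\nabla_1, \dots, \nabla_s)$. -/
open scoped RealInnerProductSpace Pointwise

namespace GNPPaper

variable {d s : ℕ}

abbrev E (d : ℕ) := EuclideanSpace ℝ (Fin d)

/-- Polar with the paper's sign convention `⟨x,y⟩ ≥ -1`. -/
def pol (A : Set (E d)) : Set (E d) := {y | ∀ x ∈ A, (-1 : ℝ) ≤ (inner ℝ x y : ℝ)}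

/-- Vertices = extreme points. -/
def Vert (A : Set (E d)) : Set (E d) := Set.extremePoints ℝ A

/-- Indicator function of a set. -/
noncomputable def ind (I : Set (E d)) (v : E d) : ℝ := I.indicator (fun _ => 1) v

/-- The piece `Δ_i` associated to a part `I` of the vertices of the polar of `A`. -/
def pieceD (A : Set (E d)) (I : Set (E d)) : Set (E d) :=
  {m | ∀ v ∈ Vert (pol A), -(ind I v) ≤ (inner ℝ m v : ℝ)}

def IsPolytope (A : Set (E d)) : Prop :=
  ∃ F : Finset (E d), A = convexHull ℝ (F : Set (E d))

def IsVertPartition (A : Set (E d)) (I : Fin s → Set (E d)) : Prop :=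
  (∀ i, I i ⊆ Vert (pol A)) ∧ ∀ v ∈ Vert (pol A), ∃! i, v ∈ I i

/-- `I` induces a generalized nef partition of `A`. -/
def IsGNP (A : Set (E d)) (I : Fin s → Set (E d)) : Prop :=
  IsPolytope A ∧ (0 : E d) ∈ interior A ∧ IsVertPartition A I ∧
    (∑ i, pieceD A (I i)) = A

/-- The dual piece `∇_j`. -/
def pieceN (A : Set (E d)) (I : Fin s → Set (E d)) (j : Fin s) : Set (E d) :=
  {y | ∀ i : Fin s, ∀ m ∈ pieceD A (I i), -(if i = j then (1:ℝ) else 0) ≤ (inner ℝ m y : ℝ)}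

def nab (A : Set (E d)) (I : Fin s → Set (E d)) : Set (E d) := ∑ j, pieceN A I j

/-- A facet: a nonempty proper face of codimension one. -/
def IsFacet (A F : Set (E d)) : Prop :=
  IsExtreme ℝ A F ∧ F.Nonempty ∧ F ≠ A ∧
    Module.finrank ℝ ↥(vectorSpan ℝ F) + 1 = d

/-- Cone of nonnegative real combinations of elements of `S`. -/
def coneOf (S : Set (E d)) : Set (E d) :=
  {x | ∃ (t : Finset (E d)) (c : E d → ℝ), (t : Set (E d)) ⊆ S ∧ (∀ v, 0 ≤ c v) ∧
      x = ∑ v ∈ t, c v • v}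

def IsLatticeSet (S : Set (E d)) : Prop := ∀ v ∈ S, ∀ k : Fin d, ∃ z : ℤ, v k = (z : ℝ)

/-- A full-dimensional simplex. -/
def IsSimplex (S : Set (E d)) : Prop :=
  ∃ F : Finset (E d), S = convexHull ℝ (F : Set (E d)) ∧ F.card = d + 1 ∧
    AffineIndependent ℝ (fun v : F => (v : E d))

/-- Good pair of generalized nef partitions. -/
def IsGoodPair (A1 A2 : Set (E d)) (I1 I2 : Fin s → Set (E d)) : Prop :=
  IsGNP A1 I1 ∧ IsGNP A2 I2 ∧
  (∀ i, pieceD A1 (I1 i) ⊆ pieceD A2 (I2 i)) ∧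
  (∀ i, IsLatticeSet (Vert (pieceD A1 (I1 i)))) ∧
  IsLatticeSet (Vert A1) ∧ IsLatticeSet (Vert (pol A2)) ∧
  (0 : E d) ∈ interior A1 ∧ (0 : E d) ∈ interior (pol A2)


section Aux

variable {d s : ℕ}

lemma convex_pol (A : Set (E d)) : Convex ℝ (pol A) := by
  intro y1 h1 y2 h2 a b ha hb hab x hx
  have t1 := h1 x hx
  have t2 := h2 x hx
  simp only [pol, Set.mem_setOf_eq, inner_add_right, inner_smul_right] at *
  nlinarith

lemma isClosed_pol (A : Set (E d)) : IsClosed (pol A) := by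
  have : pol A = ⋂ x ∈ A, {y : E d | (-1 : ℝ) ≤ (inner ℝ x y : ℝ)} := by
    ext y; simp [pol]
  rw [this]
  exact isClosed_biInter fun x _ =>
    isClosed_le continuous_const (Continuous.inner continuous_const continuous_id)

lemma isCompact_pol (A : Set (E d)) (h0 : (0 : E d) ∈ interior A) : IsCompact (pol A) := by
  obtain ⟨ε, hε, hball⟩ := Metric.isOpen_iff.1 isOpen_interior 0 h0
  have hsub : pol A ⊆ Metric.closedBall 0 (2 / ε) := by
    intro y hy
    rw [Metric.mem_closedBall, dist_zero_right]
    by_cases hy0 : y = 0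
    · simp [hy0]; positivity
    · have hny : 0 < ‖y‖ := norm_pos_iff.2 hy0
      set c : ℝ := (ε / 2) / ‖y‖ with hc
      have hcpos : 0 < c := by positivity
      have hmem : (-c) • y ∈ A := by
        refine interior_subset (hball ?_)
        rw [Metric.mem_ball, dist_zero_right, norm_smul]
        simp only [norm_neg, Real.norm_eq_abs, abs_of_pos hcpos]
        rw [hc, div_mul_cancel₀ _ (ne_of_gt hny)]
        linarith
      have := hy _ hmem
      rw [real_inner_smul_left, real_inner_self_eq_norm_sq] at this
      simp only [neg_mul] at this
      have h1 : c * ‖y‖ ^ 2 ≤ 1 := by linarith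
      rw [hc, div_mul_eq_mul_div, ] at h1
      have h2 : ε / 2 * ‖y‖ ^ 2 ≤ ‖y‖ := by
        rw [div_le_iff₀ hny] at h1; nlinarith
      rw [le_div_iff₀ hε]; nlinarith
  exact (Metric.isBounded_closedBall.subset hsub).isCompact_closure.of_isClosed_subset
    (isClosed_pol A) subset_closure

lemma pieceN_subset_pol (A : Set (E d)) (I : Fin s → Set (E d))
    (hsum : (∑ i, pieceD A (I i)) = A) (j : Fin s) : pieceN A I j ⊆ pol A := by
  intro y hy x hx
  rw [← hsum] at hx
  obtain ⟨g, hg, rfl⟩ := Set.mem_fintype_sum _ _ |>.1 hx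
  have key : ∀ i : Fin s, -(if i = j then (1 : ℝ) else 0) ≤ (inner ℝ (g i) y : ℝ) :=
    fun i => hy i (g i) (hg i)
  calc (-1 : ℝ) = ∑ i : Fin s, -(if i = j then (1 : ℝ) else 0) := by
        simp [Finset.sum_ite_eq' Finset.univ j]
    _ ≤ ∑ i : Fin s, (inner ℝ (g i) y : ℝ) := Finset.sum_le_sum fun i _ => key i
    _ = (inner ℝ (∑ i : Fin s, g i) y : ℝ) := by
        rw [sum_inner]

lemma isClosed_pieceN (A : Set (E d)) (I : Fin s → Set (E d)) (j : Fin s) :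
    IsClosed (pieceN A I j) := by
  have : pieceN A I j = ⋂ i : Fin s, ⋂ m ∈ pieceD A (I i),
      {y : E d | -(if i = j then (1:ℝ) else 0) ≤ (inner ℝ m y : ℝ)} := by
    ext y; simp [pieceN]
  rw [this]
  exact isClosed_iInter fun i => isClosed_biInter fun m _ =>
    isClosed_le continuous_const (Continuous.inner continuous_const continuous_id)

lemma convex_pieceN (A : Set (E d)) (I : Fin s → Set (E d)) (j : Fin s) :
    Convex ℝ (pieceN A I j) := by
  intro y1 h1 y2 h2 a b ha hb hab i m hm
  have t1 := h1 i m hm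
  have t2 := h2 i m hm
  simp only [inner_add_right, inner_smul_right]
  by_cases hij : i = j <;>
    simp only [hij, if_true, if_false] at * <;>
    nlinarith [mul_le_mul_of_nonneg_left t1 ha, mul_le_mul_of_nonneg_left t2 hb]

lemma zero_mem_pieceN (A : Set (E d)) (I : Fin s → Set (E d)) (j : Fin s) :
    (0 : E d) ∈ pieceN A I j := by
  intro i m _
  rw [inner_zero_right]
  by_cases h : i = j <;> simp [h]

lemma vert_mem_pieceN (A : Set (E d)) (I : Fin s → Set (E d))
    (hpart : IsVertPartition A I) {v : E d} (hv : v ∈ Vert (pol A)) :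
    ∃ j, v ∈ pieceN A I j := by
  obtain ⟨j, hj, huniq⟩ := hpart.2 v hv
  refine ⟨j, fun i m hm => ?_⟩
  have h := hm v hv
  have : ind (I i) v = if i = j then (1:ℝ) else 0 := by
    by_cases hij : i = j
    · subst hij
      simp [ind, Set.indicator_of_mem hj]
    · have hvi : v ∉ I i := fun hvi => hij (huniq i hvi)
      simp [ind, Set.indicator_of_notMem hvi, hij]
  rwa [this] at h

lemma isCompact_convexJoin {s t : Set (E d)} (hs : IsCompact s) (ht : IsCompact t) :
    IsCompact (convexJoin ℝ s t) := by
  have himg : convexJoin ℝ s t =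
      (fun p : (E d × E d) × ℝ => (1 - p.2) • p.1.1 + p.2 • p.1.2) ''
        ((s ×ˢ t) ×ˢ Set.Icc (0:ℝ) 1) := by
    ext z
    simp only [mem_convexJoin, Set.mem_image, Set.mem_prod, segment_eq_image]
    constructor
    · rintro ⟨a, ha, b, hb, θ, hθ, rfl⟩
      exact ⟨((a, b), θ), ⟨⟨ha, hb⟩, hθ⟩, rfl⟩
    · rintro ⟨⟨⟨a, b⟩, θ⟩, ⟨⟨ha, hb⟩, hθ⟩, rfl⟩
      exact ⟨a, ha, b, hb, θ, hθ, rfl⟩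
  rw [himg]
  exact ((hs.prod ht).prod isCompact_Icc).image (by fun_prop)

lemma isCompact_convexHull_biUnion {n : ℕ} (S : Fin n → Set (E d))
    (hc : ∀ j, IsCompact (S j)) (hv : ∀ j, Convex ℝ (S j)) (hne : ∀ j, (S j).Nonempty)
    (F : Finset (Fin n)) : IsCompact (convexHull ℝ (⋃ j ∈ F, S j)) := by
  classical
  induction F using Finset.induction_on with
  | empty => simp
  | @insert a F ha ih =>
    rw [Finset.set_biUnion_insert]
    rcases F.eq_empty_or_nonempty with rfl | hFne
    · simp [(hv a).convexHull_eq, hc a]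
    · have hTne : (⋃ j ∈ F, S j).Nonempty := by
        obtain ⟨b, hb⟩ := hFne
        exact ⟨(hne b).choose, Set.mem_biUnion hb (hne b).choose_spec⟩
      rw [convexHull_union (hne a) hTne, (hv a).convexHull_eq]
      exact isCompact_convexJoin (hc a) ih

lemma isCompact_convexHull_iUnion {n : ℕ} (S : Fin n → Set (E d))
    (hc : ∀ j, IsCompact (S j)) (hv : ∀ j, Convex ℝ (S j)) (hne : ∀ j, (S j).Nonempty) :
    IsCompact (convexHull ℝ (⋃ j, S j)) := by
  have := isCompact_convexHull_biUnion S hc hv hne Finset.univ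
  simpa using this

end Aux

/-- `Δ° = Conv(∇_1, …, ∇_s)`. -/
theorem pol_eq_convexHull_pieceN (A : Set (E d)) (I : Fin s → Set (E d))
    (hGNP : IsGNP A I) :
    pol A = convexHull ℝ (⋃ j : Fin s, pieceN A I j) := by
  obtain ⟨hpoly, h0, hpart, hsum⟩ := hGNP
  have hcomp := isCompact_pol A h0
  have hconv := convex_pol A
  have hcN : ∀ j, IsCompact (pieceN A I j) := fun j =>
    hcomp.of_isClosed_subset (isClosed_pieceN A I j) (pieceN_subset_pol A I hsum j)
  have hclosed : IsClosed (convexHull ℝ (⋃ j : Fin s, pieceN A I j)) :=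
    (isCompact_convexHull_iUnion _ hcN (convex_pieceN A I) (fun j => ⟨0, zero_mem_pieceN A I j⟩)).isClosed
  apply Set.Subset.antisymm
  · have hKM := closure_convexHull_extremePoints hcomp hconv
    have hsubext : Set.extremePoints ℝ (pol A) ⊆ ⋃ j : Fin s, pieceN A I j := by
      intro v hv
      obtain ⟨j, hj⟩ := vert_mem_pieceN A I hpart hv
      exact Set.mem_iUnion.2 ⟨j, hj⟩
    calc pol A = closure (convexHull ℝ (Set.extremePoints ℝ (pol A))) := hKM.symm
      _ ⊆ closure (convexHull ℝ (⋃ j : Fin s, pieceN A I j)) :=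
          closure_mono (convexHull_mono hsubext)
      _ = convexHull ℝ (⋃ j : Fin s, pieceN A I j) := hclosed.closure_eq
  · exact convexHull_min (Set.iUnion_subset fun j => pieceN_subset_pol A I hsum j) hconv

end GNPPaper
end

section
/- (Decomposition of reducible generalized nef partitions) Let $\Pi(\Delta) = \{\Delta_1, \dots, \Delta_s\}$ be a generalized nef partition of a lattice polytope $\Delta$, and suppose (after reordering) that $\Delta' = \Delta_1 + \cdots + \Delta_k$ (for some $k < s$) contains the origin in its relative interior. Let $V'$ be the linear span of $\Delta_1, \dots, \Delta_k$ and $V''$ the linear span of $\Delta_{k+1}, \dots, \Delta_s$. Then $M_{\mathbb{R}} = V' \oplus V''$, and the origin also lies in the relative interior of $\Delta'' = \Delta_{k+1} + \cdots + \Delta_s$. -/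
open scoped RealInnerProductSpace Pointwise

namespace GNPPaper

variable {d s : ℕ}

/-! ### Auxiliary lemmas for Statement 15 -/

section Aux

lemma ind_nonneg (S : Set (E d)) (v : E d) : 0 ≤ ind S v :=
  Set.indicator_nonneg (fun _ _ => zero_le_one) v

lemma ind_of_not_mem {S : Set (E d)} {v : E d} (h : v ∉ S) : ind S v = 0 :=
  Set.indicator_of_notMem h _

lemma zero_mem_pieceD (A S : Set (E d)) : (0 : E d) ∈ pieceD A S := by
  intro v _
  rw [inner_zero_left]
  exact neg_nonpos.mpr (ind_nonneg S v)

lemma convex_pieceD (A S : Set (E d)) : Convex ℝ (pieceD A S) := by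
  intro x hx y hy a b ha hb hab
  intro v hv
  have hx' := hx v hv
  have hy' := hy v hv
  have hlin : (inner ℝ (a • x + b • y) v : ℝ) = a * inner ℝ x v + b * inner ℝ y v := by
    rw [inner_add_left, real_inner_smul_left, real_inner_smul_left]
  rw [hlin]
  have h1 : a * (-(ind S v)) ≤ a * inner ℝ x v := mul_le_mul_of_nonneg_left hx' ha
  have h2 : b * (-(ind S v)) ≤ b * inner ℝ y v := mul_le_mul_of_nonneg_left hy' hb
  have h3 : -(ind S v) = a * (-(ind S v)) + b * (-(ind S v)) := by
    rw [← add_mul, hab, one_mul]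
  linarith

lemma mem_sum_sets {ι : Type*} [DecidableEq ι] (S : Finset ι) (f : ι → Set (E d)) (m : E d) :
    m ∈ ∑ i ∈ S, f i ↔ ∃ g : ι → E d, (∀ i ∈ S, g i ∈ f i) ∧ m = ∑ i ∈ S, g i := by
  induction S using Finset.cons_induction generalizing m with
  | empty =>
    simp only [Finset.sum_empty]
    constructor
    · intro h
      exact ⟨fun _ => 0, by simp, by simpa using h⟩
    · rintro ⟨g, -, rfl⟩
      simp
  | cons a S ha ih =>
    rw [Finset.sum_cons, Set.mem_add]
    constructor
    · rintro ⟨x, hx, y, hy, rfl⟩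
      obtain ⟨g, hg, rfl⟩ := (ih y).1 hy
      refine ⟨Function.update g a x, ?_, ?_⟩
      · intro i hi
        rcases Finset.mem_cons.1 hi with h | h
        · subst h
          simpa using hx
        · rw [Function.update_of_ne (fun he : i = a => ha (he ▸ h))]
          exact hg i h
      · rw [Finset.sum_cons, Function.update_self]
        congr 1
        exact (Finset.sum_congr rfl fun i hi => by
          rw [Function.update_of_ne (fun he : i = a => ha (he ▸ hi))]).symm
    · rintro ⟨g, hg, rfl⟩
      rw [Finset.sum_cons]
      exact ⟨g a, hg a (Finset.mem_cons_self _ _), ∑ i ∈ S, g i,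
        (ih _).2 ⟨g, fun i hi => hg i (Finset.mem_cons.2 (Or.inr hi)), rfl⟩, rfl⟩

lemma convex_sum_sets {ι : Type*} (S : Finset ι) (f : ι → Set (E d))
    (h : ∀ i ∈ S, Convex ℝ (f i)) : Convex ℝ (∑ i ∈ S, f i) := by
  induction S using Finset.cons_induction with
  | empty =>
    rw [Finset.sum_empty]
    have : ((0 : Set (E d))) = {0} := rfl
    rw [this]
    exact convex_singleton 0
  | cons a S ha ih =>
    rw [Finset.sum_cons]
    exact (h a (Finset.mem_cons_self _ _)).add (ih fun i hi => h i (Finset.mem_cons.2 (Or.inr hi)))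

lemma mem_interior_subtype {X : Type*} [TopologicalSpace X] {p : X → Prop} {S : Set X}
    (x : Subtype p) :
    x ∈ interior (Subtype.val ⁻¹' S : Set (Subtype p)) ↔
      ∃ t ∈ nhds (x : X), ∀ y, p y → y ∈ t → y ∈ S := by
  obtain ⟨x, hx⟩ := x
  rw [mem_interior_iff_mem_nhds, nhds_subtype_eq_comap, Filter.mem_comap]
  constructor
  · rintro ⟨t, ht, hsub⟩
    exact ⟨t, ht, fun y hy hyt => hsub (show (⟨y, hy⟩ : Subtype p) ∈ Subtype.val ⁻¹' t from hyt)⟩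
  · rintro ⟨t, ht, hsub⟩
    exact ⟨t, ht, fun z hz => hsub z.1 z.2 hz⟩

lemma vectorSpan_le_span {s : Set (E d)} : vectorSpan ℝ s ≤ Submodule.span ℝ s := by
  rw [vectorSpan_def]
  apply Submodule.span_le.2
  rintro v ⟨a, ha, b, hb, rfl⟩
  exact Submodule.sub_mem _ (Submodule.subset_span ha) (Submodule.subset_span hb)

lemma mem_span_of_mem_affineSpan {s : Set (E d)} (h0 : (0 : E d) ∈ s) {y : E d}
    (hy : y ∈ affineSpan ℝ s) : y ∈ Submodule.span ℝ s := by
  have h0' : (0 : E d) ∈ affineSpan ℝ s := subset_affineSpan ℝ s h0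
  have hv : y -ᵥ 0 ∈ (affineSpan ℝ s).direction := AffineSubspace.vsub_mem_direction hy h0'
  rw [direction_affineSpan] at hv
  have := vectorSpan_le_span hv
  simpa using this

lemma mem_affineSpan_of_mem_span {s : Set (E d)} (h0 : (0 : E d) ∈ s) {y : E d}
    (hy : y ∈ Submodule.span ℝ s) : y ∈ affineSpan ℝ s := by
  have h0' : (0 : E d) ∈ affineSpan ℝ s := subset_affineSpan ℝ s h0
  have hdir : Submodule.span ℝ s ≤ (affineSpan ℝ s).direction := by
    rw [direction_affineSpan]
    apply Submodule.span_le.2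
    intro v hv
    have := vsub_mem_vectorSpan ℝ hv h0
    simpa using this
  have := AffineSubspace.vadd_mem_of_mem_direction (hdir hy) h0'
  simpa using this

lemma exists_smul_mem_of_intrinsicInterior {s : Set (E d)} (h0 : (0 : E d) ∈ s)
    (hri : (0 : E d) ∈ intrinsicInterior ℝ s) {x : E d} (hx : x ∈ Submodule.span ℝ s) :
    ∃ δ : ℝ, 0 < δ ∧ δ • x ∈ s := by
  obtain ⟨z, hzint, hz0⟩ := mem_intrinsicInterior.1 hri
  have hz := (mem_interior_subtype z).1 hzint
  rw [hz0] at hz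
  obtain ⟨t, ht, hts⟩ := hz
  obtain ⟨ε, hε, hball⟩ := Metric.mem_nhds_iff.1 ht
  have hδpos : 0 < ε / (2 * (‖x‖ + 1)) := by positivity
  refine ⟨ε / (2 * (‖x‖ + 1)), hδpos, ?_⟩
  apply hts
  · exact mem_affineSpan_of_mem_span h0 (Submodule.smul_mem _ _ hx)
  · apply hball
    rw [Metric.mem_ball, dist_zero_right, norm_smul, Real.norm_of_nonneg hδpos.le]
    have hx1 : 0 ≤ ‖x‖ := norm_nonneg x
    rw [div_mul_eq_mul_div, div_lt_iff₀ (by positivity)]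
    nlinarith

lemma inner_zero_of_mem_span {s : Set (E d)} {v : E d}
    (h : ∀ m ∈ s, (inner ℝ m v : ℝ) = 0) : ∀ x ∈ Submodule.span ℝ s, (inner ℝ x v : ℝ) = 0 := by
  intro x hx
  induction hx using Submodule.span_induction with
  | mem m hm => exact h m hm
  | zero => exact inner_zero_left v
  | add y z _ _ hy hz => rw [inner_add_left, hy, hz, add_zero]
  | smul a y _ hy => rw [real_inner_smul_left, hy, mul_zero]

/-- If a convex set contains `0` and, for every member `m`, some nonnegative multiple of a
member equals `-m`, then `0` lies in the intrinsic interior. -/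
lemma intrinsic_of_neg {D : Set (E d)} (hcv : Convex ℝ D) (h0 : (0 : E d) ∈ D)
    (hneg : ∀ m ∈ D, ∃ t : ℝ, 0 ≤ t ∧ ∃ m' ∈ D, -m = t • m') :
    (0 : E d) ∈ intrinsicInterior ℝ D := by
  set W : Submodule ℝ (E d) := Submodule.span ℝ D with hW
  have hDW : D ⊆ (W : Set (E d)) := Submodule.subset_span
  set Dt : Set ↥W := Subtype.val ⁻¹' D with hDt
  have hcvt : Convex ℝ Dt := hcv.linear_preimage W.subtype
  have h0W : (0 : E d) ∈ W := W.zero_mem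
  have h0t : (0 : ↥W) ∈ Dt := by simpa [hDt] using h0
  have hspanDt : Submodule.span ℝ Dt = (⊤ : Submodule ℝ ↥W) := by
    apply Submodule.map_injective_of_injective W.injective_subtype
    rw [Submodule.map_span, Submodule.map_subtype_top]
    have himg : W.subtype '' Dt = D := by
      have : (W.subtype : ↥W → E d) '' Dt = ((W : Set (E d)) ∩ D) := by
        rw [hDt]
        exact Subtype.image_preimage_coe _ _
      rw [this]
      exact Set.inter_eq_self_of_subset_right hDW
    rw [himg, hW]
  have haff : affineSpan ℝ Dt = ⊤ := by
    have hdir : vectorSpan ℝ Dt = ⊤ := by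
      apply top_unique
      rw [← hspanDt]
      apply Submodule.span_le.2
      intro v hv
      have := vsub_mem_vectorSpan ℝ hv h0t
      simpa using this
    apply AffineSubspace.ext_of_direction_eq
    · rw [direction_affineSpan, hdir, AffineSubspace.direction_top]
    · exact ⟨0, subset_affineSpan ℝ Dt h0t, AffineSubspace.mem_top ℝ _ _⟩
  obtain ⟨a0, ha0⟩ := (hcvt.interior_nonempty_iff_affineSpan_eq_top).2 haff
  have ha0Dt : a0 ∈ Dt := interior_subset ha0
  have ha0D : (a0 : E d) ∈ D := ha0Dt
  obtain ⟨t, ht0, m', hm', hmeq⟩ := hneg _ ha0D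
  have hgoal : (0 : ↥W) ∈ interior Dt := by
    rcases eq_or_lt_of_le ht0 with h | ht
    · have ha00 : (a0 : E d) = 0 := by
        have := hmeq
        rw [← h, zero_smul] at this
        exact neg_eq_zero.1 this
      have : (0 : ↥W) = a0 := Subtype.ext ha00.symm
      rw [this]
      exact ha0
    · have hm'W : m' ∈ W := hDW hm'
      have hseg : (0 : ↥W) ∈ openSegment ℝ a0 (⟨m', hm'W⟩ : ↥W) := by
        refine ⟨1 / (1 + t), t / (1 + t), by positivity, by positivity, by field_simp, ?_⟩
        apply Subtype.ext
        have hcoe : ((1 / (1 + t)) • a0 + (t / (1 + t)) • (⟨m', hm'W⟩ : ↥W) : ↥W).1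
            = (1 / (1 + t)) • (a0 : E d) + (t / (1 + t)) • m' := rfl
        rw [hcoe]
        have h1 : (t / (1 + t)) • m' = (1 / (1 + t)) • (t • m') := by
          rw [smul_smul]
          congr 1
          field_simp
        rw [h1, ← hmeq, ← smul_add]
        show _ = ((0 : ↥W) : E d)
        simp
      exact hcvt.openSegment_interior_self_subset_interior ha0
        (show (⟨m', hm'W⟩ : ↥W) ∈ Dt from hm') hseg
  obtain ⟨t0, ht0n, ht0s⟩ := (mem_interior_subtype _).1 hgoal
  rw [mem_intrinsicInterior]
  have h0aff : (0 : E d) ∈ affineSpan ℝ D := subset_affineSpan ℝ D h0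
  refine ⟨⟨0, h0aff⟩, ?_, rfl⟩
  rw [mem_interior_subtype]
  refine ⟨t0, ht0n, ?_⟩
  intro y hyaff hyt
  have hyW : y ∈ W := mem_span_of_mem_affineSpan h0 hyaff
  exact ht0s y hyW hyt

end Aux

/-- decomposition of reducible generalized nef partitions: the spans `V'`
and `V''` are complementary, and `0` also lies in the relative interior of `Δ''`. -/
theorem reducible_decomposition (A : Set (E d)) (I : Fin s → Set (E d))
    (hGNP : IsGNP A I) (hlat : IsLatticeSet (Vert A))
    (P : Finset (Fin s)) (hP : P.Nonempty) (hP' : P ≠ Finset.univ)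
    (hrel : (0 : E d) ∈ intrinsicInterior ℝ (∑ i ∈ P, pieceD A (I i))) :
    IsCompl (Submodule.span ℝ (⋃ i ∈ (P : Set (Fin s)), pieceD A (I i)))
        (Submodule.span ℝ (⋃ i ∈ ((P : Set (Fin s)))ᶜ, pieceD A (I i))) ∧
      (0 : E d) ∈ intrinsicInterior ℝ (∑ i ∈ Pᶜ, pieceD A (I i)) := by
  classical
  obtain ⟨hpoly, h0A, hpart, hsumA⟩ := hGNP
  have h0A0 : (0 : E d) ∈ A := interior_subset h0A
  set D1 : Set (E d) := ∑ i ∈ P, pieceD A (I i) with hD1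
  set D2 : Set (E d) := ∑ i ∈ Pᶜ, pieceD A (I i) with hD2
  have h0i : ∀ i : Fin s, (0 : E d) ∈ pieceD A (I i) := fun i => zero_mem_pieceD A (I i)
  have h0mem : ∀ S : Finset (Fin s), (0 : E d) ∈ ∑ i ∈ S, pieceD A (I i) := fun S =>
    (mem_sum_sets S _ 0).2 ⟨fun _ => 0, fun i _ => h0i i, by simp⟩
  have h0D1 : (0 : E d) ∈ D1 := h0mem P
  have h0D2 : (0 : E d) ∈ D2 := h0mem Pᶜ
  have hcvD1 : Convex ℝ D1 := convex_sum_sets _ _ fun i _ => convex_pieceD A (I i)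
  have hcvD2 : Convex ℝ D2 := convex_sum_sets _ _ fun i _ => convex_pieceD A (I i)
  have hA12 : D1 + D2 = A := by
    rw [hD1, hD2, Finset.sum_add_sum_compl]
    exact hsumA
  -- the basic inequality coming from the defining halfspaces
  have key : ∀ (S : Finset (Fin s)) (m : E d), m ∈ ∑ i ∈ S, pieceD A (I i) →
      ∀ v ∈ Vert (pol A), (∀ i ∈ S, v ∉ I i) → 0 ≤ (inner ℝ m v : ℝ) := by
    intro S m hm v hv hnot
    obtain ⟨g, hg, rfl⟩ := (mem_sum_sets S _ m).1 hm
    rw [sum_inner]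
    apply Finset.sum_nonneg
    intro i hi
    have h := hg i hi v hv
    rwa [ind_of_not_mem (hnot i hi), neg_zero] at h
  -- a ball of radius ε around 0 inside A
  obtain ⟨ε, hε, hball⟩ := Metric.mem_nhds_iff.1 (mem_interior_iff_mem_nhds.1 h0A)
  -- A is bounded
  have hAbdd : ∃ R : ℝ, ∀ x ∈ A, ‖x‖ ≤ R := by
    obtain ⟨F, hF⟩ := hpoly
    have hb : Bornology.IsBounded A := by
      rw [hF]
      exact isBounded_convexHull.2 F.finite_toSet.isBounded
    obtain ⟨R, hR⟩ := hb.subset_closedBall 0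
    exact ⟨R, fun x hx => by
      have := hR hx
      rwa [Metric.mem_closedBall, dist_zero_right] at this⟩
  have hAclosed : IsClosed A := by
    obtain ⟨F, hF⟩ := hpoly
    rw [hF]
    exact (F.finite_toSet.isCompact_convexHull (𝕜 := ℝ)).isClosed
  have hAconv : Convex ℝ A := by
    obtain ⟨F, hF⟩ := hpoly
    rw [hF]
    exact convex_convexHull ℝ _
  -- the polar is compact and convex
  have hpol_closed : IsClosed (pol A) := by
    have hrepr : pol A = ⋂ x ∈ A, {y : E d | (-1 : ℝ) ≤ inner ℝ x y} := by
      ext y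
      simp [pol, Set.mem_iInter]
    rw [hrepr]
    exact isClosed_biInter fun x _ =>
      isClosed_le continuous_const (Continuous.inner continuous_const continuous_id)
  have hpol_conv : Convex ℝ (pol A) := by
    intro y1 h1 y2 h2 a b ha hb hab x hx
    have e : (inner ℝ x (a • y1 + b • y2) : ℝ) = a * inner ℝ x y1 + b * inner ℝ x y2 := by
      rw [inner_add_right, real_inner_smul_right, real_inner_smul_right]
    rw [e]
    have k1 : a * (-1 : ℝ) ≤ a * inner ℝ x y1 := mul_le_mul_of_nonneg_left (h1 x hx) ha
    have k2 : b * (-1 : ℝ) ≤ b * inner ℝ x y2 := mul_le_mul_of_nonneg_left (h2 x hx) hb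
    nlinarith
  have hpol_bdd : pol A ⊆ Metric.closedBall 0 (2 / ε) := by
    intro y hy
    rw [Metric.mem_closedBall, dist_zero_right]
    by_contra hlt
    push_neg at hlt
    have hny : 0 < ‖y‖ := lt_trans (by positivity) hlt
    have hy0 : y ≠ 0 := norm_pos_iff.1 hny
    set x : E d := -((ε / 2) • (‖y‖⁻¹ • y)) with hx
    have hxball : x ∈ Metric.ball (0 : E d) ε := by
      rw [mem_ball_zero_iff, hx, norm_neg, norm_smul, norm_smul, Real.norm_of_nonneg (by positivity : (0:ℝ) ≤ ε / 2), Real.norm_of_nonneg (by positivity : (0:ℝ) ≤ ‖y‖⁻¹)]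
      rw [inv_mul_cancel₀ hny.ne', mul_one]
      linarith
    have hxA := hball hxball
    have hineq := hy x hxA
    have hxy : (inner ℝ x y : ℝ) = -((ε / 2) * ‖y‖) := by
      rw [hx, inner_neg_left, real_inner_smul_left, real_inner_smul_left,
        real_inner_self_eq_norm_mul_norm]
      field_simp
    rw [hxy] at hineq
    have : ‖y‖ ≤ 2 / ε := by
      rw [le_div_iff₀ hε]
      nlinarith
    linarith
  have hpol_cpt : IsCompact (pol A) :=
    (isCompact_closedBall (0 : E d) (2 / ε)).of_isClosed_subset hpol_closed hpol_bdd
  -- bipolar: the vertex inequalities recover A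
  have hA_char : ∀ x : E d, (∀ v ∈ Vert (pol A), (-1 : ℝ) ≤ inner ℝ x v) → x ∈ A := by
    intro x hx
    by_contra hxA
    obtain ⟨f, u, hfa, hux⟩ := geometric_hahn_banach_closed_point hAconv hAclosed hxA
    have hu : 0 < u := by
      have := hfa 0 h0A0
      simpa using this
    set y0 : E d := (InnerProductSpace.toDual ℝ (E d)).symm f with hy0def
    have hy0 : ∀ w : E d, (inner ℝ y0 w : ℝ) = f w := fun w =>
      InnerProductSpace.toDual_symm_apply
    set y : E d := -(u⁻¹ • y0) with hydef
    have hinner : ∀ w : E d, (inner ℝ w y : ℝ) = -(u⁻¹ * f w) := by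
      intro w
      rw [hydef, inner_neg_right, real_inner_smul_right, real_inner_comm, hy0]
    have hypol : y ∈ pol A := by
      intro a ha
      rw [hinner a]
      have hfa' := hfa a ha
      have h3 : u⁻¹ * f a ≤ 1 := by
        rw [inv_mul_eq_div, div_le_one hu]
        exact hfa'.le
      linarith
    have hKM : pol A ⊆ {v : E d | (-1 : ℝ) ≤ inner ℝ x v} := by
      have hclosedH : IsClosed {v : E d | (-1 : ℝ) ≤ inner ℝ x v} :=
        isClosed_le continuous_const (Continuous.inner continuous_const continuous_id)
      have hconvH : Convex ℝ {v : E d | (-1 : ℝ) ≤ inner ℝ x v} := by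
        intro v1 h1 v2 h2 a b ha hb hab
        have e : (inner ℝ x (a • v1 + b • v2) : ℝ) = a * inner ℝ x v1 + b * inner ℝ x v2 := by
          rw [inner_add_right, real_inner_smul_right, real_inner_smul_right]
        simp only [Set.mem_setOf_eq] at h1 h2 ⊢
        rw [e]
        nlinarith
      calc pol A = closure (convexHull ℝ (Set.extremePoints ℝ (pol A))) :=
            (closure_convexHull_extremePoints hpol_cpt hpol_conv).symm
        _ ⊆ {v : E d | (-1 : ℝ) ≤ inner ℝ x v} :=
            closure_minimal (convexHull_min hx hconvH) hclosedH
    have h1 := hKM hypol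
    simp only [Set.mem_setOf_eq] at h1
    rw [hinner x] at h1
    have h3 : u⁻¹ * f x ≤ 1 := by linarith
    have h4 : f x ≤ u := by
      rw [inv_mul_eq_div, div_le_one hu] at h3
      exact h3
    linarith
  -- only 0 satisfies all inequalities nonnegatively
  have hzero : ∀ x : E d, (∀ v ∈ Vert (pol A), (0 : ℝ) ≤ inner ℝ x v) → x = 0 := by
    intro x hx
    obtain ⟨R, hR⟩ := hAbdd
    by_contra hx0
    have hn : ∀ n : ℕ, (n : ℝ) • x ∈ A := by
      intro n
      apply hA_char
      intro v hv
      rw [real_inner_smul_left]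
      have h := hx v hv
      have : (0 : ℝ) ≤ (n : ℝ) * inner ℝ x v := mul_nonneg (Nat.cast_nonneg n) h
      linarith
    have hbd : ∀ n : ℕ, (n : ℝ) * ‖x‖ ≤ R := by
      intro n
      have := hR _ (hn n)
      rwa [norm_smul, Real.norm_natCast] at this
    have hxpos : 0 < ‖x‖ := norm_pos_iff.2 hx0
    obtain ⟨n, hnn⟩ := exists_nat_gt (R / ‖x‖)
    rw [div_lt_iff₀ hxpos] at hnn
    linarith [hbd n]
  have hval : ∀ v ∈ Vert (pol A), ∃! i, v ∈ I i := hpart.2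
  -- the relative-interior hypothesis forces equalities on D1
  have key2 : ∀ m ∈ D1, ∀ v ∈ Vert (pol A), (∀ i ∈ P, v ∉ I i) → (inner ℝ m v : ℝ) = 0 := by
    intro m hm v hv hvP
    have h1 : 0 ≤ (inner ℝ m v : ℝ) := key P m hm v hv hvP
    obtain ⟨δ, hδ, hδm⟩ := exists_smul_mem_of_intrinsicInterior h0D1 hrel
      (Submodule.neg_mem _ (Submodule.subset_span hm))
    have h2 : 0 ≤ (inner ℝ (δ • -m) v : ℝ) := key P _ hδm v hv hvP
    rw [real_inner_smul_left, inner_neg_left] at h2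
    nlinarith
  -- the cone over D2
  set C2 : Set (E d) := {x | ∃ t : ℝ, 0 ≤ t ∧ ∃ m ∈ D2, x = t • m} with hC2
  have h0C2 : (0 : E d) ∈ C2 := ⟨0, le_refl 0, 0, h0D2, by simp⟩
  have hD2C2 : D2 ⊆ C2 := fun m hm => ⟨1, zero_le_one, m, hm, (one_smul _ _).symm⟩
  have hC2smul : ∀ r : ℝ, 0 ≤ r → ∀ x ∈ C2, r • x ∈ C2 := by
    rintro r hr x ⟨t, ht, m, hm, rfl⟩
    exact ⟨r * t, mul_nonneg hr ht, m, hm, (smul_smul r t m)⟩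
  have hC2add : ∀ x ∈ C2, ∀ y ∈ C2, x + y ∈ C2 := by
    rintro x ⟨t1, ht1, m1, hm1, rfl⟩ y ⟨t2, ht2, m2, hm2, rfl⟩
    rcases eq_or_lt_of_le (add_nonneg ht1 ht2) with h | h
    · have ht1' : t1 = 0 := by linarith
      have ht2' : t2 = 0 := by linarith
      refine ⟨0, le_refl 0, 0, h0D2, by simp [ht1', ht2']⟩
    · refine ⟨t1 + t2, h.le, (t1 / (t1 + t2)) • m1 + (t2 / (t1 + t2)) • m2, ?_, ?_⟩
      · exact hcvD2 hm1 hm2 (div_nonneg ht1 h.le) (div_nonneg ht2 h.le)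
          (by field_simp)
      · rw [smul_add, smul_smul, smul_smul]
        congr 2 <;> field_simp
  have hC2key : ∀ x ∈ C2, ∀ v ∈ Vert (pol A), (∀ i ∈ Pᶜ, v ∉ I i) → 0 ≤ (inner ℝ x v : ℝ) := by
    rintro x ⟨t, ht, m, hm, rfl⟩ v hv hnot
    rw [real_inner_smul_left]
    exact mul_nonneg ht (key Pᶜ m hm v hv hnot)
  -- intersection of the cone with span D1 is trivial
  have hinter : ∀ x, x ∈ C2 → x ∈ Submodule.span ℝ D1 → x = 0 := by
    intro x hxC hxS
    apply hzero
    intro v hv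
    obtain ⟨i0, hi0, hi0u⟩ := hval v hv
    by_cases hiP : i0 ∈ P
    · apply hC2key x hxC v hv
      intro i hi hvi
      exact Finset.mem_compl.1 hi (hi0u i hvi ▸ hiP)
    · have hD1v : ∀ m ∈ D1, (inner ℝ m v : ℝ) = 0 := fun m hm =>
        key2 m hm v hv (fun i hiP' hvi => hiP (hi0u i hvi ▸ hiP'))
      exact le_of_eq (inner_zero_of_mem_span hD1v x hxS).symm
  -- every vector splits as span D1 + cone D2
  have hsplit : ∀ x : E d, ∃ p ∈ Submodule.span ℝ D1, ∃ c ∈ C2, x = p + c := by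
    intro x
    by_cases hx0 : x = 0
    · exact ⟨0, Submodule.zero_mem _, 0, h0C2, by simp [hx0]⟩
    · have hnx : 0 < ‖x‖ := norm_pos_iff.2 hx0
      set y : E d := (ε / (2 * ‖x‖)) • x with hy
      have hyA : y ∈ A := by
        apply hball
        rw [mem_ball_zero_iff, hy, norm_smul, Real.norm_of_nonneg (by positivity)]
        rw [div_mul_eq_mul_div, div_lt_iff₀ (by positivity)]
        nlinarith
      rw [← hA12] at hyA
      obtain ⟨p0, hp0, c0, hc0, hpc⟩ := Set.mem_add.1 hyA
      set r : ℝ := (2 * ‖x‖) / ε with hr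
      have hrpos : 0 ≤ r := by positivity
      have hxy : x = r • y := by
        rw [hy, smul_smul]
        have : r * (ε / (2 * ‖x‖)) = 1 := by
          rw [hr]
          field_simp
        rw [this, one_smul]
      refine ⟨r • p0, Submodule.smul_mem _ _ (Submodule.subset_span hp0),
        r • c0, hC2smul r hrpos _ (hD2C2 hc0), ?_⟩
      rw [hxy, ← hpc, smul_add]
  -- the cone is closed under negation
  have hnegC2 : ∀ c ∈ C2, -c ∈ C2 := by
    intro c hc
    obtain ⟨p, hp, c2, hc2, heq⟩ := hsplit (-c)
    have hmem : c + c2 ∈ C2 := hC2add _ hc _ hc2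
    have hp' : p = -c - c2 := eq_sub_of_add_eq heq.symm
    have hsum0 : c + c2 ∈ Submodule.span ℝ D1 := by
      have hval : c + c2 = -p := by rw [hp']; abel
      rw [hval]
      exact Submodule.neg_mem _ hp
    have hcc : c + c2 = 0 := hinter _ hmem hsum0
    have hc2e : c2 = -c := eq_neg_of_add_eq_zero_right hcc
    rw [← hc2e]
    exact hc2
  -- span D2 is contained in the cone
  have hspanD2_C2 : ∀ x ∈ Submodule.span ℝ D2, x ∈ C2 := by
    intro x hx
    induction hx using Submodule.span_induction with
    | mem m hm => exact hD2C2 hm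
    | zero => exact h0C2
    | add y z _ _ hy hz => exact hC2add _ hy _ hz
    | smul a y _ hy =>
      rcases le_or_gt 0 a with ha | ha
      · exact hC2smul a ha _ hy
      · have h1 : (-a) • y ∈ C2 := hC2smul (-a) (by linarith) _ hy
        have h2 := hnegC2 _ h1
        rwa [← neg_smul, neg_neg] at h2
  -- each piece sits inside the partial sums
  have hsubset_sum : ∀ (S : Finset (Fin s)) (i : Fin s), i ∈ S →
      pieceD A (I i) ⊆ ∑ j ∈ S, pieceD A (I j) := by
    intro S i hi m hm
    apply (mem_sum_sets S _ m).2
    refine ⟨fun j => if j = i then m else 0, ?_, ?_⟩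
    · intro j hj
      by_cases h : j = i
      · subst h; simpa using hm
      · simp only [h, if_false]
        exact h0i j
    · rw [Finset.sum_ite_eq' S i (fun _ => m), if_pos hi]
  -- identify the goal's spans with span D1, span D2
  have hspan1 : Submodule.span ℝ (⋃ i ∈ (P : Set (Fin s)), pieceD A (I i))
      = Submodule.span ℝ D1 := by
    apply le_antisymm
    · apply Submodule.span_le.2
      intro x hx
      simp only [Set.mem_iUnion] at hx
      obtain ⟨i, hiP, hxi⟩ := hx
      exact Submodule.subset_span (hsubset_sum P i hiP hxi)
    · apply Submodule.span_le.2
      intro m hm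
      obtain ⟨g, hg, rfl⟩ := (mem_sum_sets P _ m).1 hm
      apply Submodule.sum_mem
      intro i hi
      apply Submodule.subset_span
      simp only [Set.mem_iUnion]
      exact ⟨i, hi, hg i hi⟩
  have hspan2 : Submodule.span ℝ (⋃ i ∈ ((P : Set (Fin s)))ᶜ, pieceD A (I i))
      = Submodule.span ℝ D2 := by
    apply le_antisymm
    · apply Submodule.span_le.2
      intro x hx
      simp only [Set.mem_iUnion] at hx
      obtain ⟨i, hiP, hxi⟩ := hx
      have hiP' : i ∈ Pᶜ := Finset.mem_compl.2 (by simpa using hiP)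
      exact Submodule.subset_span (hsubset_sum Pᶜ i hiP' hxi)
    · apply Submodule.span_le.2
      intro m hm
      obtain ⟨g, hg, rfl⟩ := (mem_sum_sets Pᶜ _ m).1 hm
      apply Submodule.sum_mem
      intro i hi
      apply Submodule.subset_span
      simp only [Set.mem_iUnion]
      exact ⟨i, by simpa using Finset.mem_compl.1 hi, hg i hi⟩
  constructor
  · constructor
    · rw [Submodule.disjoint_def]
      intro x hx1 hx2
      rw [hspan1] at hx1
      rw [hspan2] at hx2
      exact hinter x (hspanD2_C2 x hx2) hx1
    · rw [codisjoint_iff_le_sup]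
      intro x _
      obtain ⟨p, hp, c, hc, rfl⟩ := hsplit x
      apply Submodule.add_mem_sup
      · rw [hspan1]; exact hp
      · rw [hspan2]
        obtain ⟨t, ht, m, hm, rfl⟩ := hc
        exact Submodule.smul_mem _ _ (Submodule.subset_span hm)
  · apply intrinsic_of_neg hcvD2 h0D2
    intro m hm
    obtain ⟨t, ht, m', hm', heq⟩ := hnegC2 m (hD2C2 hm)
    exact ⟨t, ht, m', hm', heq⟩

end GNPPaper
end
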